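/- arXiv:1803.05816 — 5 statements merged into one kernel-verified Lean document; each statement's English description precedes it below -/
import Mathlib

section
/- Let k be an algebraically closed field, let n ≥ 1 and let p ∈ k[X_1,…,X_n]. Suppose that p is invariant under every matrix M ∈ SL_n(k). Then for every commutative k-algebra A and every matrix M ∈ SL_n(A), the image of p under the canonical map k[X_1,…,X_n] → A[X_1,…,X_n] is invariant under M. (This is the paper's Proposition on invariants over algebraically closed fields, B^G = B^{G(k)}, in the case of the smooth affine algebraic group G = SL_{n,k} acting linearly on a polynomial ring.) -/
/-!
Substituting the generic matrix `X = (X_ij)` over `k[X_ij]` into `p` gives a polynomial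
`q = X • p - p` whose coefficients vanish at every point of `SL_n(k)`. The ideal `(det X - 1)` is
prime: dividing one column of `X` by `det X` embeds `k[X_ij] / (det X - 1)` into the domain
`k[X_ij][1 / det X]`. By the Nullstellensatz the coefficients of `q` lie in `(det X - 1)`, and
every `M ∈ SL_n(A)` is a specialisation `X ↦ M` killing this ideal, so `M • p - p = 0`.
-/

open MvPolynomial Matrix

theorem Ideal.eq_ker_of_comp_eq_mk {A B : Type*} [CommRing A] [Semiring B] {I : Ideal A}
    (ψ : A →+* B) (hI : I ≤ RingHom.ker ψ) (θ : B →+* A ⧸ I)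
    (hθψ : θ.comp ψ = Ideal.Quotient.mk I) : I = RingHom.ker ψ := by
  refine le_antisymm hI fun x hx => ?_
  rw [← Ideal.Quotient.eq_zero_iff_mem, ← hθψ, RingHom.comp_apply, RingHom.mem_ker.1 hx, map_zero]

namespace MvPolynomial

variable {ι R S : Type*} [Fintype ι]

noncomputable def linearSubst [CommSemiring R] (M : Matrix ι ι R) :
    MvPolynomial ι R →ₐ[R] MvPolynomial ι R :=
  aeval fun i => ∑ j, C (M i j) * X j

theorem map_linearSubst [CommSemiring R] [CommSemiring S] (f : R →+* S) (M : Matrix ι ι R)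
    (p : MvPolynomial ι R) : map f (linearSubst M p) = linearSubst (M.map f) (map f p) := by
  simp only [linearSubst, aeval_eq_eval₂Hom, ← RingHom.comp_apply]
  congr 1
  refine ringHom_ext (fun r => ?_) fun i => ?_ <;> simp [map_sum]

theorem map_eval₂Hom_linearSubst_mvPolynomialX_sub [CommRing R] [CommRing S]
    (f : R →+* S) (N : Matrix ι ι S) (p : MvPolynomial ι R) :
    map (eval₂Hom f fun s : ι × ι => N s.1 s.2)
        (linearSubst (mvPolynomialX ι ι R) (map C p) - map C p)
      = linearSubst N (map f p) - map f p := by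
  rw [map_sub, map_linearSubst, coe_eval₂Hom, mvPolynomialX_map_eval₂, map_map, eval₂Hom_comp_C]

variable [DecidableEq ι]

theorem eval₂Hom_det_mvPolynomialX [CommRing R] [CommRing S] (f : R →+* S) (N : Matrix ι ι S) :
    eval₂Hom f (fun s : ι × ι => N s.1 s.2) (mvPolynomialX ι ι R).det = N.det := by
  rw [RingHom.map_det, RingHom.mapMatrix_apply, coe_eval₂Hom, mvPolynomialX_map_eval₂]

variable (ι R) in
noncomputable def slIdeal [CommRing R] : Ideal (MvPolynomial (ι × ι) R) :=
  Ideal.span {(mvPolynomialX ι ι R).det - 1}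

theorem slIdeal_le_ker_eval₂Hom [CommRing R] [CommRing S] (f : R →+* S)
    (M : Matrix.SpecialLinearGroup ι S) :
    slIdeal ι R ≤ RingHom.ker (eval₂Hom f fun s : ι × ι => M s.1 s.2) := by
  rw [slIdeal, Ideal.span_singleton_le_iff_mem, RingHom.mem_ker, map_sub, map_one,
    eval₂Hom_det_mvPolynomialX, M.det_coe, sub_self]

theorem slIdeal_isPrime [CommRing R] [IsDomain R] [Nonempty ι] : (slIdeal ι R).IsPrime := by
  set D := (mvPolynomialX ι ι R).det
  set L := Localization.Away D
  set toL := algebraMap (MvPolynomial (ι × ι) R) L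
  have : IsDomain L := IsLocalization.isDomain_localization
    (powers_le_nonZeroDivisors_of_noZeroDivisors (det_mvPolynomialX_ne_zero ι R))
  set u : L := IsLocalization.Away.invSelf D with hu
  let j₀ : ι := Classical.arbitrary ι
  let N := (mvPolynomialX ι ι R).map toL
  let ψ : MvPolynomial (ι × ι) R →+* L :=
    eval₂Hom (toL.comp C) fun s => N.updateCol j₀ (u • fun i => N i j₀) s.1 s.2
  have hψD : ψ D = 1 := by
    have hND : N.det = toL D := (RingHom.map_det toL _).symm
    rw [eval₂Hom_det_mvPolynomialX, det_updateCol_smul, updateCol_eq_self, hND, mul_comm, hu,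
      IsLocalization.Away.mul_invSelf]
  let mk := Ideal.Quotient.mk (slIdeal ι R)
  have hmkD : mk D = 1 := by
    rw [← map_one mk, Ideal.Quotient.mk_eq_mk_iff_sub_mem]
    exact Ideal.subset_span rfl
  let θ : L →+* _ := IsLocalization.Away.lift D (g := mk) (hmkD ▸ isUnit_one)
  have hθ : ∀ a, θ (toL a) = mk a := IsLocalization.Away.lift_eq D _
  have hθu : θ u = 1 := by
    have h := congrArg θ (IsLocalization.Away.mul_invSelf (S := L) D)
    rwa [map_mul, hθ, hmkD, one_mul, map_one] at h
  have hθψ : θ.comp ψ = mk := by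
    refine ringHom_ext (fun r => ?_) fun s => ?_
    · simp [ψ, hθ]
    · obtain ⟨i, j⟩ := s
      by_cases h : j = j₀
      · subst h
        simp [ψ, N, hθ, hθu, mvPolynomialX_apply]
      · simp [ψ, N, updateCol_apply, h, hθ, mvPolynomialX_apply]
  have hI : slIdeal ι R ≤ RingHom.ker ψ := by
    rw [slIdeal, Ideal.span_singleton_le_iff_mem, RingHom.mem_ker, map_sub, hψD, map_one, sub_self]
  rw [Ideal.eq_ker_of_comp_eq_mk ψ hI θ hθψ]
  exact RingHom.ker_isPrime ψ

theorem mem_slIdeal_of_forall_eval_eq_zero {k : Type*} [Field k] [IsAlgClosed k] [Nonempty ι]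
    {f : MvPolynomial (ι × ι) k}
    (hf : ∀ M : SpecialLinearGroup ι k, eval (fun s : ι × ι => M s.1 s.2) f = 0) :
    f ∈ slIdeal ι k := by
  rw [← slIdeal_isPrime.radical, ← vanishingIdeal_zeroLocus_eq_radical (K := k)]
  intro x hx
  have hdet : (of fun i j => x (i, j)).det = 1 := by
    have h := hx _ (Ideal.subset_span rfl)
    rw [aeval_eq_eval₂Hom, Algebra.algebraMap_self, map_sub, map_one, sub_eq_zero] at h
    exact (eval₂Hom_det_mvPolynomialX _ _).symm.trans h
  exact hf ⟨_, hdet⟩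

end MvPolynomial

/-- Invariance of a polynomial under `SL n k`, for `k` algebraically closed, implies
invariance under `SL n A` for every commutative `k`-algebra `A`. -/
theorem sl_invariant_of_invariant_over_algClosed
    {k : Type} [Field k] [IsAlgClosed k] (n : ℕ) (hn : 1 ≤ n)
    (p : MvPolynomial (Fin n) k)
    (hp : ∀ M : Matrix.SpecialLinearGroup (Fin n) k,
      aeval (fun i => ∑ j, C (M.1 i j) * X j) p = p) :
    ∀ (A : Type) [CommRing A] [Algebra k A],
      ∀ M : Matrix.SpecialLinearGroup (Fin n) A,
        aeval (fun i => ∑ j, C (M.1 i j) * X j) (map (algebraMap k A) p)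
          = map (algebraMap k A) p := by
  intro A _ _ M
  have : Nonempty (Fin n) := ⟨⟨0, hn⟩⟩
  set q := linearSubst (mvPolynomialX (Fin n) (Fin n) k) (map C p) - map C p
  have hq : ∀ m, coeff m q ∈ slIdeal (Fin n) k := fun m =>
    mem_slIdeal_of_forall_eval_eq_zero fun N => by
      rw [← coeff_map, eval, map_eval₂Hom_linearSubst_mvPolynomialX_sub, MvPolynomial.map_id,
        linearSubst, hp N, sub_self, coeff_zero]
  have hspec : map (eval₂Hom (algebraMap k A) fun s => M s.1 s.2) q = 0 := by
    ext m
    rw [coeff_map, coeff_zero, ← RingHom.mem_ker]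
    exact slIdeal_le_ker_eval₂Hom _ M (hq m)
  rwa [map_eval₂Hom_linearSubst_mvPolynomialX_sub, sub_eq_zero] at hspec
end

section
/- Let O be a complete discrete valuation ring with uniformizer π in which 2, 3, 5 and 7 are invertible. Let P0 be the symmetric 3×3 Gram matrix over O of the quadratic form ρ0 = −(2^12·5·7/3^2)·(v_2^2 − v_1·v_3) in the variables v_1, v_2, v_3. Let P be a symmetric 3×3 matrix over O such that P ≡ P0 modulo π^s for some integer s ≥ 1. Then there exist a matrix T ∈ GL_3(O) and an element u ∈ O such that T ≡ Id_3 modulo π^s, u ≡ 1 modulo π^s, and Tᵀ·P·T = u·P0. -/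
/-!
Newton's method for quadratic forms. If `Tᵀ P T = P₀ + F` with `F ≡ 0 mod π^m` and `m ≥ 1`,
then `T' = T (1 - ½ P₀⁻¹ F)` cancels the part of the error that is linear in `F`, so
`T'ᵀ P T' ≡ P₀ mod π^(2m)` while `T' ≡ T mod π^m`. Starting from `T = 1`, the iterates converge
`π`-adically to some `T ≡ 1 mod π^s` with `Tᵀ P T = P₀` exactly, so `u = 1` works.
-/

open Matrix

namespace Ideal

variable {R : Type*} [CommRing R] {n : Type*} [Fintype n] [DecidableEq n]
  {I J : Ideal R} {A B : Matrix n n R}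

theorem transpose_mem_matrix (hA : A ∈ I.matrix n) : Aᵀ ∈ I.matrix n :=
  fun i j => hA j i

theorem mul_mem_matrix_right (hA : A ∈ I.matrix n) (B : Matrix n n R) : A * B ∈ I.matrix n :=
  fun i j => I.sum_mem fun k _ => I.mul_mem_right (B k j) (hA i k)

theorem mul_mem_matrix_mul (hA : A ∈ I.matrix n) (hB : B ∈ J.matrix n) :
    A * B ∈ (I * J).matrix n :=
  fun i j => (I * J).sum_mem fun k _ => mul_mem_mul (hA i k) (hB k j)

theorem eq_zero_of_forall_mem_matrix_pow [IsHausdorff I R] (h : ∀ k, A ∈ (I ^ k).matrix n) :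
    A = 0 := by
  ext i j
  refine IsHausdorff.haus ‹_› _ fun k => ?_
  rw [SModEq.sub_mem, sub_zero, smul_eq_mul, mul_top]
  exact h k i j

theorem exists_sub_mem_matrix_pow [IsPrecomplete I R] (g : ℕ → Matrix n n R)
    (hg : ∀ {k l}, k ≤ l → g l - g k ∈ (I ^ k).matrix n) :
    ∃ L : Matrix n n R, ∀ k, L - g k ∈ (I ^ k).matrix n := by
  have hentry (i j : n) : ∃ x : R, ∀ k, x - g k i j ∈ I ^ k := by
    obtain ⟨x, hx⟩ := IsPrecomplete.prec ‹_› (f := fun k => g k i j) fun hkl => by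
      rw [SModEq.sub_mem, smul_eq_mul, mul_top, ← neg_mem_iff, neg_sub]
      exact hg hkl i j
    refine ⟨x, fun k => ?_⟩
    have := hx k
    rwa [SModEq.sub_mem, smul_eq_mul, mul_top, ← neg_mem_iff, neg_sub] at this
  choose L hL using hentry
  exact ⟨Matrix.of L, fun k i j => hL i j k⟩

end Ideal

theorem Submodule.sub_mem_of_succ_sub_mem {R M : Type*} [Semiring R] [AddCommGroup M] [Module R M]
    {F : ℕ → Submodule R M} (hF : Antitone F) {g : ℕ → M} (hg : ∀ k, g (k + 1) - g k ∈ F k)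
    {k l : ℕ} (hkl : k ≤ l) : g l - g k ∈ F k := by
  induction l, hkl using Nat.le_induction with
  | base => simp
  | succ l hkl ih =>
    rw [← sub_add_sub_cancel]
    exact add_mem (hF hkl (hg l)) ih

namespace Matrix

variable {R : Type*} [CommRing R] [Invertible (2 : R)] {n : Type*} [Fintype n] [DecidableEq n]

noncomputable def newtonStep (P₀ P T : Matrix n n R) : Matrix n n R :=
  T * (1 - ⅟(2 : R) • P₀⁻¹ * (Tᵀ * P * T - P₀))

variable {I : Ideal R} {P₀ P T : Matrix n n R} {s : ℕ}

theorem newtonStep_sub_mem (hT : Tᵀ * P * T - P₀ ∈ I.matrix n) :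
    newtonStep P₀ P T - T ∈ I.matrix n := by
  rw [newtonStep, mul_sub, mul_one, sub_sub_cancel_left]
  exact neg_mem (Ideal.mul_mem_left _ _ (Ideal.mul_mem_left _ _ hT))

theorem newtonStep_error_mem (hP₀ : P₀.IsSymm) (hdet : IsUnit P₀.det) (hP : P.IsSymm)
    (hT : Tᵀ * P * T - P₀ ∈ I.matrix n) :
    (newtonStep P₀ P T)ᵀ * P * newtonStep P₀ P T - P₀ ∈ (I * I).matrix n := by
  set Q := Tᵀ * P * T
  set F := Q - P₀
  set X := ⅟(2 : R) • P₀⁻¹ * F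
  have hF : Fᵀ = F := by
    simp only [F, Q, transpose_sub, transpose_mul, transpose_transpose, hP.eq, hP₀.eq, mul_assoc]
  have hX : Xᵀ = ⅟(2 : R) • F * P₀⁻¹ := by
    rw [transpose_mul, transpose_smul, hF, hP₀.inv.eq, mul_smul_comm, smul_mul_assoc]
  have hP₀X : P₀ * X = ⅟(2 : R) • F := by
    rw [← mul_assoc, mul_smul_comm, mul_nonsing_inv P₀ hdet, smul_mul_assoc, one_mul]
  have hXP₀ : Xᵀ * P₀ = ⅟(2 : R) • F := by
    rw [hX, mul_assoc, nonsing_inv_mul P₀ hdet, mul_one]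
  have hlin : F - Xᵀ * P₀ - P₀ * X = 0 := by
    rw [hXP₀, hP₀X, sub_sub, ← add_smul, ← two_mul, mul_invOf_self, one_smul, sub_self]
  have hXI : X ∈ I.matrix n := Ideal.mul_mem_left _ _ hT
  have hstep : newtonStep P₀ P T = T * (1 - X) := rfl
  rw [hstep]
  clear_value X
  have hquad : (T * (1 - X))ᵀ * P * (T * (1 - X)) - P₀ = Xᵀ * (Q * X - F) - F * X := by
    rw [← sub_eq_zero, ← hlin, transpose_mul, transpose_sub, transpose_one]
    simp only [F, Q]
    noncomm_ring
  rw [hquad]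
  exact sub_mem (Ideal.mul_mem_matrix_mul (Ideal.transpose_mem_matrix hXI)
    (sub_mem (Ideal.mul_mem_left _ _ hXI) hT)) (Ideal.mul_mem_matrix_mul hT hXI)

noncomputable def newtonSeq (P₀ P : Matrix n n R) : ℕ → Matrix n n R
  | 0 => 1
  | k + 1 => newtonStep P₀ P (newtonSeq P₀ P k)

theorem newtonSeq_error_mem (hP₀ : P₀.IsSymm) (hdet : IsUnit P₀.det) (hP : P.IsSymm)
    (hs : 1 ≤ s) (hP₀P : P - P₀ ∈ (I ^ s).matrix n) (k : ℕ) :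
    (newtonSeq P₀ P k)ᵀ * P * newtonSeq P₀ P k - P₀ ∈ (I ^ (s + k)).matrix n := by
  induction k with
  | zero => simpa [newtonSeq] using hP₀P
  | succ k ih =>
    refine Ideal.matrix_monotone n ?_ (newtonStep_error_mem hP₀ hdet hP ih)
    rw [← pow_add]
    exact Ideal.pow_le_pow_right (by omega)

theorem newtonSeq_succ_sub_mem (hP₀ : P₀.IsSymm) (hdet : IsUnit P₀.det) (hP : P.IsSymm)
    (hs : 1 ≤ s) (hP₀P : P - P₀ ∈ (I ^ s).matrix n) (k : ℕ) :
    newtonSeq P₀ P (k + 1) - newtonSeq P₀ P k ∈ (I ^ (s + k)).matrix n :=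
  newtonStep_sub_mem (newtonSeq_error_mem hP₀ hdet hP hs hP₀P k)

theorem exists_transpose_mul_mul_eq_of_sub_mem_matrix_pow [IsAdicComplete I R]
    (hP₀ : P₀.IsSymm) (hdet : IsUnit P₀.det) (hP : P.IsSymm) (hs : 1 ≤ s)
    (hP₀P : P - P₀ ∈ (I ^ s).matrix n) :
    ∃ T : Matrix n n R, T - 1 ∈ (I ^ s).matrix n ∧ Tᵀ * P * T = P₀ := by
  set g := newtonSeq P₀ P
  have hanti : Antitone fun k => (I ^ (s + k)).matrix n :=
    fun k l hkl => Ideal.matrix_monotone n (Ideal.pow_le_pow_right (by omega))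
  have hcauchy {k l : ℕ} (hkl : k ≤ l) : g l - g k ∈ (I ^ (s + k)).matrix n :=
    Submodule.sub_mem_of_succ_sub_mem hanti (newtonSeq_succ_sub_mem hP₀ hdet hP hs hP₀P) hkl
  obtain ⟨T, hT⟩ := Ideal.exists_sub_mem_matrix_pow g fun hkl =>
    Ideal.matrix_monotone n (Ideal.pow_le_pow_right (by omega)) (hcauchy hkl)
  refine ⟨T, ?_, ?_⟩
  · rw [← sub_add_sub_cancel T (g s)]
    exact add_mem (hT s) (hcauchy (Nat.zero_le s))
  · rw [← sub_eq_zero]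
    refine Ideal.eq_zero_of_forall_mem_matrix_pow (I := I) fun k => ?_
    have hsplit : Tᵀ * P * T - P₀ = Tᵀ * P * (T - g k) + (T - g k)ᵀ * P * g k
        + ((g k)ᵀ * P * g k - P₀) := by
      rw [transpose_sub]; noncomm_ring
    rw [hsplit]
    refine add_mem (add_mem (Ideal.mul_mem_left _ _ (hT k)) ?_) ?_
    · exact Ideal.mul_mem_matrix_right
        (Ideal.mul_mem_matrix_right (Ideal.transpose_mem_matrix (hT k)) P) (g k)
    · exact Ideal.matrix_monotone n (Ideal.pow_le_pow_right (by omega))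
        (newtonSeq_error_mem hP₀ hdet hP hs hP₀P k)

end Matrix

theorem Matrix.isUnit_det_of_transpose_mul_mul_eq {R : Type*} [CommRing R] {n : Type*}
    [Fintype n] [DecidableEq n] {P₀ P T : Matrix n n R} (h : Tᵀ * P * T = P₀)
    (hP₀ : IsUnit P₀.det) : IsUnit T.det := by
  rw [← h, det_mul, det_mul, det_transpose, mul_right_comm] at hP₀
  exact isUnit_of_mul_isUnit_right (isUnit_of_mul_isUnit_left hP₀)

theorem isUnit_det_of_smul_eq_rho0 {R : Type*} [CommRing R]
    (h2 : IsUnit (2 : R)) (h5 : IsUnit (5 : R)) (h7 : IsUnit (7 : R)) {P₀ : Matrix (Fin 3) (Fin 3) R}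
    (hP₀ : (2 * 3 ^ 2 : R) • P₀
      = (-(2 ^ 12 * 5 * 7) : R) • (!![0, 0, -1; 0, 2, 0; -1, 0, 0] : Matrix (Fin 3) (Fin 3) R)) :
    IsUnit P₀.det := by
  have hdet := congrArg det hP₀
  rw [det_smul, det_smul, Fintype.card_fin] at hdet
  have hM : (!![0, 0, -1; 0, 2, 0; -1, 0, 0] : Matrix (Fin 3) (Fin 3) R).det = -2 := by
    simp [det_fin_three]
  have hunit : IsUnit ((-(2 ^ 12 * 5 * 7) : R) ^ 3 * (-2)) :=
    ((((h2.pow 12).mul h5).mul h7).neg.pow 3).mul h2.neg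
  rw [← hM, ← hdet] at hunit
  exact isUnit_of_mul_isUnit_right hunit

theorem exists_congruence_to_rho0_general
    {O : Type} [CommRing O]
    (π : O) [IsAdicComplete (Ideal.span {π}) O]
    (h2 : IsUnit (2 : O)) (h5 : IsUnit (5 : O)) (h7 : IsUnit (7 : O))
    (P0 : Matrix (Fin 3) (Fin 3) O)
    (hP0sym : P0.IsSymm)
    (hP0 : (2 * 3 ^ 2 : O) • P0
      = (-(2 ^ 12 * 5 * 7) : O) • (!![0, 0, -1; 0, 2, 0; -1, 0, 0] : Matrix (Fin 3) (Fin 3) O))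
    (P : Matrix (Fin 3) (Fin 3) O) (hPsym : P.IsSymm)
    (s : ℕ) (hs : 1 ≤ s)
    (hcong : ∀ i j, π ^ s ∣ (P i j - P0 i j)) :
    ∃ (T : Matrix (Fin 3) (Fin 3) O) (u : O),
      IsUnit T.det ∧
      (∀ i j, π ^ s ∣ (T i j - (1 : Matrix (Fin 3) (Fin 3) O) i j)) ∧
      π ^ s ∣ (u - 1) ∧
      T.transpose * P * T = u • P0 := by
  let := h2.invertible
  have hmem {A : Matrix (Fin 3) (Fin 3) O} :
      A ∈ (Ideal.span {π} ^ s).matrix (Fin 3) ↔ ∀ i j, π ^ s ∣ A i j := by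
    simp only [Ideal.mem_matrix, Ideal.span_singleton_pow, Ideal.mem_span_singleton]
  have hdet := isUnit_det_of_smul_eq_rho0 h2 h5 h7 hP0
  obtain ⟨T, hT1, hT⟩ := Matrix.exists_transpose_mul_mul_eq_of_sub_mem_matrix_pow
    hP0sym hdet hPsym hs (hmem.2 hcong)
  exact ⟨T, 1, Matrix.isUnit_det_of_transpose_mul_mul_eq hT hdet, hmem.1 hT1, by simp,
    by rw [one_smul, hT]⟩

/-- Rigidification of quadratic forms congruent to `ρ₀` over a complete DVR with residue
characteristic not `2, 3, 5, 7`: if a symmetric matrix `P` is congruent to the Gram matrix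
`P₀` of `ρ₀ = -(2^12·5·7/3^2)·(v₂² - v₁v₃)` modulo `π^s`, then there are `T ∈ GL₃(O)` and
`u ∈ O`, both congruent to the identity (resp. `1`) modulo `π^s`, with `Tᵀ·P·T = u·P₀`. -/
theorem exists_congruence_to_rho0
    {O : Type} [CommRing O] [IsDomain O] [IsDiscreteValuationRing O]
    (π : O) (hπ : Irreducible π) [IsAdicComplete (Ideal.span {π}) O]
    (h2 : IsUnit (2 : O)) (h3 : IsUnit (3 : O)) (h5 : IsUnit (5 : O)) (h7 : IsUnit (7 : O))
    (P0 : Matrix (Fin 3) (Fin 3) O)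
    (hP0sym : P0.IsSymm)
    (hP0 : (2 * 3 ^ 2 : O) • P0
      = (-(2 ^ 12 * 5 * 7) : O) • (!![0, 0, -1; 0, 2, 0; -1, 0, 0] : Matrix (Fin 3) (Fin 3) O))
    (P : Matrix (Fin 3) (Fin 3) O) (hPsym : P.IsSymm)
    (s : ℕ) (hs : 1 ≤ s)
    (hcong : ∀ i j, π ^ s ∣ (P i j - P0 i j)) :
    ∃ (T : Matrix (Fin 3) (Fin 3) O) (u : O),
      IsUnit T.det ∧
      (∀ i j, π ^ s ∣ (T i j - (1 : Matrix (Fin 3) (Fin 3) O) i j)) ∧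
      π ^ s ∣ (u - 1) ∧
      T.transpose * P * T = u • P0 :=
  exists_congruence_to_rho0_general π h2 h5 h7 P0 hP0sym hP0 P hPsym s hs hcong
end

section
/- Let k be a field of characteristic different from 2. Let q ∈ k[x_1,x_2,x_3] be a homogeneous polynomial of degree 2 such that the quotient ring A := k[x_1,x_2,x_3]/(q) is an integrally closed integral domain (this holds when q is a nondegenerate quadratic form), and let g ∈ k[x_1,x_2,x_3] be a homogeneous polynomial of degree 4. Then the ring k[x_1,x_2,x_3,y]/(q, y^2 + g) is reduced if and only if g does not belong to the ideal generated by q in k[x_1,x_2,x_3]. -/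
/-!
Modulo `C q` the ring is `A[y]/(y² + ḡ)`, where `A = k[x₁,x₂,x₃]/(q)` is a domain in which
`2 ≠ 0`. If `ḡ = 0`, then `y` is nilpotent. Otherwise `y² + ḡ` is separable over the fraction
field of `A`, so it generates a radical ideal there, and since it is monic, divisibility by it
descends to `A[y]`.
-/

open Polynomial

namespace Polynomial

theorem Monic.isRadical_of_isRadical_map {A B : Type*} [CommRing A] [CommRing B]
    {f : A[X]} (hf : f.Monic) {φ : A →+* B} (hφ : Function.Injective φ)
    (hrad : IsRadical (f.map φ)) : IsRadical f := fun n y hdvd =>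
  (map_dvd_map φ hφ hf).mp (hrad n _ (by simpa using Polynomial.map_dvd φ hdvd))

theorem isRadical_X_sq_add_C_iff {A : Type*} [CommRing A] [IsDomain A] (h2 : (2 : A) ≠ 0)
    (c : A) : IsRadical (X ^ 2 + C c) ↔ c ≠ 0 := by
  constructor
  · rintro hrad rfl
    have hdvd : (X ^ 2 : A[X]) ∣ X := by simpa using hrad 2 X
    simpa using natDegree_le_of_dvd hdvd X_ne_zero
  · intro hc
    set K := FractionRing A
    have hinj : Function.Injective (algebraMap A K) := IsFractionRing.injective A K
    refine (monic_X_pow_add_C c two_ne_zero).isRadical_of_isRadical_map hinj ?_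
    have hmap : (X ^ 2 + C c).map (algebraMap A K) = X ^ 2 - C (-algebraMap A K c) := by
      simp [sub_eq_add_neg]
    rw [hmap]
    refine (separable_X_pow_sub_C _ ?_ ?_).squarefree.isRadical
    · simpa only [map_ofNat, Nat.cast_ofNat] using (map_ne_zero_iff _ hinj).mpr h2
    · exact neg_ne_zero.mpr ((map_ne_zero_iff _ hinj).mpr hc)

theorem isReduced_quotient_span_X_sq_add_C_iff {A : Type*} [CommRing A] [IsDomain A]
    (h2 : (2 : A) ≠ 0) (c : A) :
    IsReduced (A[X] ⧸ Ideal.span {X ^ 2 + C c}) ↔ c ≠ 0 := by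
  rw [← Ideal.isRadical_iff_quotient_reduced, ← isRadical_iff_span_singleton,
    isRadical_X_sq_add_C_iff h2]

theorem ker_quotientMk_comp_mapRingHom {R : Type*} [CommRing R] (I : Ideal R) (p : R[X]) :
    RingHom.ker ((Ideal.Quotient.mk (Ideal.span {p.map (Ideal.Quotient.mk I)})).comp
      (mapRingHom (Ideal.Quotient.mk I))) = Ideal.span {p} ⊔ I.map C := by
  have hsurj : Function.Surjective (mapRingHom (Ideal.Quotient.mk I)) :=
    map_surjective _ Ideal.Quotient.mk_surjective
  rw [← RingHom.comap_ker, Ideal.mk_ker, ← coe_mapRingHom, ← Set.image_singleton,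
    ← Ideal.map_span, Ideal.comap_map_of_surjective _ hsurj, ← RingHom.ker_eq_comap_bot,
    ker_mapRingHom, Ideal.mk_ker]

theorem isReduced_quotient_span_C_insert_iff {R : Type*} [CommRing R] (a : R) (p : R[X]) :
    IsReduced (R[X] ⧸ Ideal.span {C a, p}) ↔
      IsReduced ((R ⧸ Ideal.span {a})[X] ⧸
        Ideal.span {p.map (Ideal.Quotient.mk (Ideal.span {a}))}) := by
  have hsurj : Function.Surjective ((Ideal.Quotient.mk (Ideal.span {p.map
      (Ideal.Quotient.mk (Ideal.span {a}))})).comp (mapRingHom (Ideal.Quotient.mk _))) :=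
    Ideal.Quotient.mk_surjective.comp (map_surjective _ Ideal.Quotient.mk_surjective)
  rw [← RingHom.ker_isRadical_iff_reduced_of_surjective hsurj, ker_quotientMk_comp_mapRingHom,
    Ideal.map_span, Set.image_singleton, ← Ideal.span_union, Set.union_singleton,
    Ideal.isRadical_iff_quotient_reduced]

end Polynomial

theorem isReduced_iff_not_mem_span_of_char_ne_two_general
    {k : Type} [Field k] (h2 : (2 : k) ≠ 0)
    (q : MvPolynomial (Fin 3) k)
    [IsDomain (MvPolynomial (Fin 3) k ⧸ Ideal.span {q})]
    (g : MvPolynomial (Fin 3) k) :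
    IsReduced (Polynomial (MvPolynomial (Fin 3) k) ⧸
        Ideal.span {(Polynomial.C q : Polynomial (MvPolynomial (Fin 3) k)),
          Polynomial.X ^ 2 + Polynomial.C g})
      ↔ g ∉ Ideal.span {q} := by
  have h2A : (2 : MvPolynomial (Fin 3) k ⧸ Ideal.span {q}) ≠ 0 := by
    simpa only [map_ofNat] using
      (map_ne_zero (algebraMap k (MvPolynomial (Fin 3) k ⧸ Ideal.span {q}))).mpr h2
  rw [isReduced_quotient_span_C_insert_iff, Polynomial.map_add, Polynomial.map_pow, map_X, map_C,
    isReduced_quotient_span_X_sq_add_C_iff h2A, ne_eq, Ideal.Quotient.eq_zero_iff_mem]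

/-- Reducedness criterion in residue characteristic ≠ 2: with `q` a degree-2 form such that
`k[x₁,x₂,x₃]/(q)` is an integrally closed domain and `g` a degree-4 form, the ring
`k[x₁,x₂,x₃,y]/(q, y² + g)` is reduced iff `g` is not a multiple of `q`. -/
theorem isReduced_iff_not_mem_span_of_char_ne_two
    {k : Type} [Field k] (h2 : (2 : k) ≠ 0)
    (q : MvPolynomial (Fin 3) k) (hq : q.IsHomogeneous 2)
    [IsDomain (MvPolynomial (Fin 3) k ⧸ Ideal.span {q})]
    [IsIntegrallyClosed (MvPolynomial (Fin 3) k ⧸ Ideal.span {q})]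
    (g : MvPolynomial (Fin 3) k) (hg : g.IsHomogeneous 4) :
    IsReduced (Polynomial (MvPolynomial (Fin 3) k) ⧸
        Ideal.span {(Polynomial.C q : Polynomial (MvPolynomial (Fin 3) k)),
          Polynomial.X ^ 2 + Polynomial.C g})
      ↔ g ∉ Ideal.span {q} :=
  isReduced_iff_not_mem_span_of_char_ne_two_general h2 q g
end

section
/- Let O be a discrete valuation ring with uniformizer π and residue field k. Let s ≥ 0 be an integer and ε ∈ {0,1} with 2s + ε > 0. Let Q ∈ O[x_1,x_2,x_3] be a quadratic form whose reduction modulo π is nonzero, and let T = T_0 + T_1·y where T_0, T_1 ∈ O[x_1,x_2,x_3]. Then the ring B := O[x_1,x_2,x_3,y]/(Q − π^s·y, y^2 + π^ε·T) is a flat O-module; equivalently, B has no nonzero π-torsion. -/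
/-!
Let `f = Q - π^s y` and `g = y² + π^ε T`, which is monic in `y`. If `π p = a f + b g`,
dividing `a` by `g` we may assume `deg_y a < 2`. Modulo `π` the relations become `(Q̄, ḡ)` with
`ḡ` monic of degree 2 when `s ≥ 1`, and `(Q̄ - y, y²)` when `s = 0` (so `ε > 0`); in both cases
a degree count shows that such a low-degree syzygy is zero. Hence `π` divides `a` and `b`, and
`p ∈ (f, g)`. So `π` is a nonzerodivisor on `B`, which over a DVR means that `B` is
torsion-free, hence flat.
-/

open Polynomial

theorem IsDiscreteValuationRing.isTorsionFree_of_isSMulRegular {R M : Type*} [CommRing R]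
    [IsDomain R] [IsDiscreteValuationRing R] [AddCommGroup M] [Module R M] {ϖ : R}
    (hϖ : Irreducible ϖ) (h : IsSMulRegular M ϖ) : Module.IsTorsionFree R M := by
  refine ⟨fun r hr => ?_⟩
  obtain ⟨n, u, rfl⟩ := eq_unit_mul_pow_irreducible hr.ne_zero hϖ
  exact (u.isSMulRegular M).mul (h.pow n)

theorem Ideal.isSMulRegular_quotient_of_mul_mem {R S : Type*} [CommRing R] [CommRing S]
    [Algebra R S] {I : Ideal S} {r : R} (h : ∀ p, algebraMap R S r * p ∈ I → p ∈ I) :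
    IsSMulRegular (S ⧸ I) r :=
  (isSMulRegular_map (algebraMap R S) fun m => algebraMap_smul S r m).mp
    ((isSMulRegular_quotient_iff_mem_of_smul_mem I _).mpr h)

theorem Polynomial.C_dvd_of_map_eq_zero {A A' : Type*} [CommRing A] [CommRing A']
    {φ : A →+* A'} {a : A} (hker : RingHom.ker φ = Ideal.span {a}) {p : A[X]}
    (hp : p.map φ = 0) : C a ∣ p := by
  rw [C_dvd_iff_dvd_coeff]
  intro n
  rw [← Ideal.mem_span_singleton, ← hker, RingHom.mem_ker, ← coeff_map, hp, coeff_zero]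

theorem Polynomial.mem_span_pair_of_C_mul_mem {A A' : Type*} [CommRing A] [IsDomain A]
    [CommRing A'] [Nontrivial A'] {φ : A →+* A'} {a : A} (ha : a ≠ 0)
    (hker : RingHom.ker φ = Ideal.span {a}) {f g : A[X]} (hg : g.Monic)
    (hsyz : ∀ r b : A'[X], r.degree < (g.map φ).degree →
      r * f.map φ + b * g.map φ = 0 → r = 0 ∧ b = 0)
    {p : A[X]} (hp : C a * p ∈ Ideal.span {f, g}) : p ∈ Ideal.span {f, g} := by
  obtain ⟨u, v, huv⟩ := Ideal.mem_span_pair.mp hp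
  have heq : (u %ₘ g) * f + (v + (u /ₘ g) * f) * g = C a * p := by
    rw [← huv]; nth_rewrite 3 [← modByMonic_add_div u g]; ring
  have hφa : φ a = 0 := by rw [← RingHom.mem_ker, hker]; exact Ideal.mem_span_singleton_self a
  obtain ⟨hr, hb⟩ := hsyz ((u %ₘ g).map φ) ((v + (u /ₘ g) * f).map φ)
    (by rw [hg.degree_map]; exact (degree_map_le).trans_lt (degree_modByMonic_lt u hg))
    (by simpa [hφa] using congrArg (map φ) heq)
  obtain ⟨r, hr⟩ := C_dvd_of_map_eq_zero hker hr
  obtain ⟨b, hb⟩ := C_dvd_of_map_eq_zero hker hb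
  refine Ideal.mem_span_pair.mpr ⟨r, b, mul_left_cancel₀ (C_ne_zero.mpr ha) ?_⟩
  rw [← heq, hr, hb]; ring

theorem Polynomial.eq_zero_of_mul_C_add_mul_eq_zero_of_degree_lt {D : Type*} [CommRing D]
    [IsDomain D] {c : D} (hc : c ≠ 0) {g r b : D[X]} (hr : r.degree < g.degree)
    (h : r * C c + b * g = 0) : r = 0 ∧ b = 0 := by
  have hb : b = 0 := by
    by_contra hb
    have := degree_le_mul_left g hb
    rw [mul_comm, eq_neg_of_add_eq_zero_right h, degree_neg, degree_mul_C hc] at this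
    exact this.not_gt hr
  subst hb
  simpa [hc] using h

theorem Polynomial.eq_zero_of_mul_C_sub_X_add_mul_X_sq_eq_zero {D : Type*} [CommRing D]
    [IsDomain D] {c : D} (hc : c ≠ 0) {r b : D[X]} (hr : r.degree < 2)
    (h : r * (C c - X) + b * X ^ 2 = 0) : r = 0 ∧ b = 0 := by
  have h0 := congrArg (coeff · 0) h
  have h1 := congrArg (coeff · 1) h
  simp only [coeff_add, coeff_mul_X_pow', mul_sub, coeff_sub, coeff_mul_C, coeff_mul_X,
    coeff_mul_X_zero] at h0 h1
  simp only [Nat.not_ofNat_le_one, if_false, add_zero, sub_zero, Nat.ofNat_pos.not_ge] at h0 h1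
  have hr0 : r.coeff 0 = 0 := (mul_eq_zero.mp h0).resolve_right hc
  have hr1 : r.coeff 1 = 0 := by simpa [hr0, hc] using h1
  have hr : r = 0 := by
    rw [eq_X_add_C_of_degree_le_one (Order.le_of_lt_succ hr), hr0, hr1]; simp
  subst hr
  simpa [X_ne_zero] using h

theorem MvPolynomial.ker_map_quotient_mk_span_singleton {σ O : Type*} [CommRing O] (π : O) :
    RingHom.ker (map (Ideal.Quotient.mk (Ideal.span {π})) : MvPolynomial σ O →+* _) =
      Ideal.span {C π} := by
  rw [ker_map, Ideal.mk_ker, Ideal.map_span, Set.image_singleton]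

noncomputable section ToggleModel

variable {σ O : Type*} [CommRing O]

def toggleRel₁ (π : O) (s : ℕ) (Q : MvPolynomial σ O) : (MvPolynomial σ O)[X] :=
  C Q - C (MvPolynomial.C (π ^ s)) * X

def toggleRel₂ (π : O) (ε : ℕ) (T0 T1 : MvPolynomial σ O) : (MvPolynomial σ O)[X] :=
  X ^ 2 + C (MvPolynomial.C (π ^ ε)) * (C T0 + C T1 * X)

theorem toggleRel₂_monic (π : O) (ε : ℕ) (T0 T1 : MvPolynomial σ O) :
    (toggleRel₂ π ε T0 T1).Monic := by
  unfold toggleRel₂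
  monicity!

theorem toggleRels_syzygy_mod_eq_zero (π : O) [(Ideal.span {π}).IsPrime] {s ε : ℕ}
    (hsε : 0 < 2 * s + ε) (Q T0 T1 : MvPolynomial σ O)
    (hQ : MvPolynomial.map (Ideal.Quotient.mk (Ideal.span {π})) Q ≠ 0)
    (r b : (MvPolynomial σ (O ⧸ Ideal.span {π}))[X])
    (hr : r.degree <
      ((toggleRel₂ π ε T0 T1).map
        (MvPolynomial.map (Ideal.Quotient.mk (Ideal.span {π})))).degree)
    (h : r * (toggleRel₁ π s Q).map (MvPolynomial.map (Ideal.Quotient.mk (Ideal.span {π}))) +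
      b * (toggleRel₂ π ε T0 T1).map
        (MvPolynomial.map (Ideal.Quotient.mk (Ideal.span {π}))) = 0) :
    r = 0 ∧ b = 0 := by
  have hπ : Ideal.Quotient.mk (Ideal.span {π}) π = 0 :=
    Ideal.Quotient.eq_zero_iff_mem.mpr (Ideal.mem_span_singleton_self π)
  rcases Nat.eq_zero_or_pos s with rfl | hs
  · have hε : ε ≠ 0 := by omega
    exact eq_zero_of_mul_C_sub_X_add_mul_X_sq_eq_zero hQ
      (by simpa [toggleRel₂, hπ, hε] using hr)
      (by simpa [toggleRel₁, toggleRel₂, hπ, hε] using h)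
  · exact eq_zero_of_mul_C_add_mul_eq_zero_of_degree_lt hQ (by simpa [hπ, hs.ne'] using hr)
      (by simpa [toggleRel₁, hπ, hs.ne'] using h)

end ToggleModel

theorem flat_of_toggle_model_ring_general
    {O : Type} [CommRing O] [IsDomain O] [IsDiscreteValuationRing O]
    (π : O) (hπ : Irreducible π)
    (s ε : ℕ) (hsε : 0 < 2 * s + ε)
    (Q : MvPolynomial (Fin 3) O)
    (hQred : MvPolynomial.map (Ideal.Quotient.mk (Ideal.span {π})) Q ≠ 0)
    (T0 T1 : MvPolynomial (Fin 3) O) :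
    Module.Flat O (Polynomial (MvPolynomial (Fin 3) O) ⧸
      Ideal.span {Polynomial.C Q - Polynomial.C (MvPolynomial.C (π ^ s)) * Polynomial.X,
        Polynomial.X ^ 2 + Polynomial.C (MvPolynomial.C (π ^ ε)) *
          (Polynomial.C T0 + Polynomial.C T1 * Polynomial.X)}) := by
  have : (Ideal.span {π}).IsPrime := (Ideal.span_singleton_prime hπ.ne_zero).mpr hπ.prime
  let B := (MvPolynomial (Fin 3) O)[X] ⧸
    Ideal.span {toggleRel₁ π s Q, toggleRel₂ π ε T0 T1}
  have : Module.IsTorsionFree O B :=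
    IsDiscreteValuationRing.isTorsionFree_of_isSMulRegular hπ <|
      Ideal.isSMulRegular_quotient_of_mul_mem fun p hp =>
        mem_span_pair_of_C_mul_mem (MvPolynomial.C_ne_zero.mpr hπ.ne_zero)
          (MvPolynomial.ker_map_quotient_mk_span_singleton π) (toggleRel₂_monic π ε T0 T1)
          (toggleRels_syzygy_mod_eq_zero π hsε Q T0 T1 hQred)
          (by simpa [Polynomial.algebraMap_apply, MvPolynomial.algebraMap_eq] using hp)
  exact (inferInstance : Module.Flat O B)

/-- Flatness over a DVR of the ring
`O[x₁,x₂,x₃,y]/(Q - π^s·y, y² + π^ε·(T₀ + T₁·y))` where `Q` is a quadratic form whose reduction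
mod `π` is nonzero, `s ≥ 0`, `ε ∈ {0,1}` and `2s + ε > 0`. -/
theorem flat_of_toggle_model_ring
    {O : Type} [CommRing O] [IsDomain O] [IsDiscreteValuationRing O]
    (π : O) (hπ : Irreducible π)
    (s ε : ℕ) (hε : ε = 0 ∨ ε = 1) (hsε : 0 < 2 * s + ε)
    (Q : MvPolynomial (Fin 3) O) (hQhom : Q.IsHomogeneous 2)
    (hQred : MvPolynomial.map (Ideal.Quotient.mk (Ideal.span {π})) Q ≠ 0)
    (T0 T1 : MvPolynomial (Fin 3) O) :
    Module.Flat O (Polynomial (MvPolynomial (Fin 3) O) ⧸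
      Ideal.span {Polynomial.C Q - Polynomial.C (MvPolynomial.C (π ^ s)) * Polynomial.X,
        Polynomial.X ^ 2 + Polynomial.C (MvPolynomial.C (π ^ ε)) *
          (Polynomial.C T0 + Polynomial.C T1 * Polynomial.X)}) :=
  flat_of_toggle_model_ring_general π hπ s ε hsε Q hQred T0 T1
end

section
/- Let k be a field of characteristic different from 2, and let φ : k[x_1,x_2,x_3] → k[x,z] be the k-algebra homomorphism determined by x_1 ↦ x^2, x_2 ↦ 2xz, x_3 ↦ z^2. Then the kernel of φ is the principal ideal generated by Q_0 := x_2^2 − 4·x_1·x_3. (This is the assertion used in the paper that the kernel of the map b consists exactly of the multiples Q_0·Q of the conic Q_0.) -/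
/-!
View `k[x₁,x₂,x₃]` as `A[x₂]` with `A = k[x₁,x₃]`. There `Q₀ = x₂² - 4x₁x₃` is monic of degree 2
and killed by `b`, so by division every element of the kernel is a multiple of `Q₀` plus a
remainder `a + c·x₂` in the kernel. Its image `a(x²,z²) + 2xz·c(x²,z²)` splits into a part even
and a part odd in `x`; the reflection `x ↦ -x` separates them, so both vanish, and `a = c = 0`
because `expand 2` is injective.
-/

open MvPolynomial

namespace Polynomial

theorem ker_eq_span_singleton_of_monic {R S : Type*} [CommRing R] [Nontrivial R] [Semiring S]
    (f : R[X] →+* S) {q : R[X]} (hq : q.Monic) (hfq : f q = 0)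
    (hf : ∀ p : R[X], p.degree < q.degree → f p = 0 → p = 0) :
    RingHom.ker f = Ideal.span {q} := by
  ext p
  rw [RingHom.mem_ker, Ideal.mem_span_singleton, ← modByMonic_eq_zero_iff_dvd hq]
  have hdecomp : f (p %ₘ q) = f p := by
    rw [← modByMonic_add_div p q, map_add, map_mul, hfq, zero_mul, add_zero,
      modByMonic_add_div p q]
  constructor
  · intro hp
    exact hf _ (degree_modByMonic_lt p hq) (hdecomp.trans hp)
  · intro hp
    rw [← hdecomp, hp, map_zero]

end Polynomial

namespace MvPolynomial

section Reflection

variable {σ R : Type*} [CommRing R] [DecidableEq σ]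

noncomputable def negVar (i : σ) : MvPolynomial σ R →ₐ[R] MvPolynomial σ R :=
  aeval (Function.update X i (-X i))

@[simp]
theorem negVar_X_self (i : σ) : negVar i (X i : MvPolynomial σ R) = -X i := by
  simp [negVar]

@[simp]
theorem negVar_X_of_ne {i j : σ} (h : j ≠ i) : negVar i (X j : MvPolynomial σ R) = X j := by
  simp [negVar, h]

@[simp]
theorem negVar_expand_two (i : σ) (p : MvPolynomial σ R) :
    negVar i (expand 2 p) = expand 2 p := by
  suffices (negVar i).comp (expand 2) = expand 2 from AlgHom.congr_fun this p
  refine algHom_ext fun j => ?_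
  by_cases h : j = i
  · simp [h]
  · simp [h]

theorem eq_zero_of_add_X_mul_eq_zero [IsDomain R] (h2 : (2 : MvPolynomial σ R) ≠ 0) {i : σ}
    {f g : MvPolynomial σ R} (hf : negVar i f = f) (hg : negVar i g = g) (h : f + X i * g = 0) :
    f = 0 ∧ g = 0 := by
  have hneg : f - X i * g = 0 := by
    simpa [hf, hg, sub_eq_add_neg] using congrArg (negVar i) h
  have hg0 : g = 0 := by
    have h2g : 2 * X i * g = 0 := by linear_combination h - hneg
    simpa [h2, X_ne_zero] using h2g
  exact ⟨by simpa [hg0] using h, hg0⟩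

end Reflection

section Veronese

variable (R : Type*) [CommRing R]

/-- `R[x₁,x₂,x₃] ≃ R[x₁,x₃][x₂]`; in the coefficient ring `X 0` and `X 1` stand for `x₁`, `x₃`. -/
noncomputable def middleVarEquiv :
    MvPolynomial (Fin 3) R ≃ₐ[R] Polynomial (MvPolynomial (Fin 2) R) :=
  (renameEquiv R (Equiv.swap 0 1)).trans (finSuccEquiv R 2)

@[simp]
theorem middleVarEquiv_X_zero : middleVarEquiv R (X 0) = Polynomial.C (X 0) := by
  simpa [middleVarEquiv] using finSuccEquiv_X_succ (R := R) (n := 2) (j := 0)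

@[simp]
theorem middleVarEquiv_X_one : middleVarEquiv R (X 1) = Polynomial.X := by
  simp [middleVarEquiv, finSuccEquiv_X_zero]

@[simp]
theorem middleVarEquiv_X_two : middleVarEquiv R (X 2) = Polynomial.C (X 1) := by
  have hswap : Equiv.swap (0 : Fin 3) 1 2 = 2 := by decide
  simpa [middleVarEquiv, hswap] using finSuccEquiv_X_succ (R := R) (n := 2) (j := 1)

/-- The map `b` read on `R[x₁,x₃][x₂]`: coefficients go through `expand 2`, and `x₂ ↦ 2xz`. -/
noncomputable def veroneseTower :
    Polynomial (MvPolynomial (Fin 2) R) →ₐ[R] MvPolynomial (Fin 2) R :=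
  Polynomial.aevalTower (expand 2) (2 * X 0 * X 1)

theorem aeval_veronese_eq_comp :
    aeval ![X 0 ^ 2, 2 * X 0 * X 1, X 1 ^ 2] =
      (veroneseTower R).comp (middleVarEquiv R).toAlgHom := by
  refine algHom_ext fun i => ?_
  fin_cases i <;> simp [veroneseTower]

theorem veroneseTower_conic :
    veroneseTower R (Polynomial.X ^ 2 - Polynomial.C (4 * X 0 * X 1)) = 0 := by
  simp [veroneseTower, map_ofNat]
  ring

theorem ker_veroneseTower [IsDomain R] (h2 : (2 : R) ≠ 0) :
    RingHom.ker (veroneseTower R) =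
      Ideal.span {Polynomial.X ^ 2 - Polynomial.C (4 * X 0 * X 1)} := by
  have hmonic : (Polynomial.X ^ 2 - Polynomial.C (4 * X 0 * X 1 : MvPolynomial (Fin 2) R)).Monic :=
    Polynomial.monic_X_pow_sub_C _ two_ne_zero
  refine Polynomial.ker_eq_span_singleton_of_monic _ hmonic (veroneseTower_conic R)
    fun p hp hp0 => ?_
  rw [Polynomial.degree_X_pow_sub_C two_pos] at hp
  rw [Polynomial.eq_X_add_C_of_degree_le_one (Order.le_of_lt_succ hp)] at hp0 ⊢
  simp only [veroneseTower, AlgHom.toRingHom_eq_coe, RingHom.coe_coe, map_add, map_mul,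
    Polynomial.aevalTower_C, Polynomial.aevalTower_X] at hp0
  have h2' : (2 : MvPolynomial (Fin 2) R) ≠ 0 := by
    simpa only [map_ofNat, map_zero] using (C_injective (Fin 2) R).ne h2
  obtain ⟨ha, hb⟩ := eq_zero_of_add_X_mul_eq_zero h2' (i := 0)
    (f := expand 2 (p.coeff 0)) (g := 2 * X 1 * expand 2 (p.coeff 1))
    (negVar_expand_two 0 _) (by simp [map_ofNat]) (by linear_combination hp0)
  rw [expand_eq_zero two_pos] at ha
  have hb' : p.coeff 1 = 0 := by simpa [h2', X_ne_zero, expand_eq_zero] using hb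
  simp [ha, hb']

end Veronese

end MvPolynomial

/-- In characteristic ≠ 2, the kernel of the substitution `x₁ ↦ x², x₂ ↦ 2xz, x₃ ↦ z²`
from `k[x₁,x₂,x₃]` to `k[x,z]` is the principal ideal generated by `Q₀ = x₂² - 4·x₁·x₃`. -/
theorem ker_veronese_substitution {k : Type} [Field k] (h2 : (2 : k) ≠ 0) :
    RingHom.ker (aeval ![X 0 ^ 2, 2 * X 0 * X 1, X 1 ^ 2] :
        MvPolynomial (Fin 3) k →ₐ[k] MvPolynomial (Fin 2) k)
      = Ideal.span {(X 1 ^ 2 - 4 * X 0 * X 2 : MvPolynomial (Fin 3) k)} := by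
  have hconic : middleVarEquiv k (X 1 ^ 2 - 4 * X 0 * X 2) =
      Polynomial.X ^ 2 - Polynomial.C (4 * X 0 * X 1) := by
    simp [map_ofNat]
  ext p
  rw [RingHom.mem_ker, aeval_veronese_eq_comp, Ideal.mem_span_singleton,
    ← map_dvd_iff (middleVarEquiv k), hconic, ← Ideal.mem_span_singleton,
    ← ker_veroneseTower k h2]
  rfl
end
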